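/- Let n ≥ 1, m ≥ 2, T ≥ 3. Let φ(y) = −Σ_{k=1}^m log(y(k)) be the log-barrier, let ũ^(1),…,ũ^(T) ∈ ℝ^m with ‖ũ^(s)‖_∞ ≤ 1, let x̂^(1),…,x̂^(T) ∈ Δ_m with conventions x̂^(0) = x̂^(−1) = 0 and ũ_a^(0) = 0, and for each a ∈ {1,…,m} set ũ_a^(s) = x̂^(s)(a)·ũ^(s), η_a^(t) = min{ √( (m log T / 8) / ( 4 + Σ_{s=1}^{t−1} ‖ũ_a^(s) − ũ_a^(s−1)‖_∞² ) ), 1/(256 n √m) }, and let y_a^(t) be the maximizer over Δ_m of y ↦ ⟨y, ũ_a^(t−1) + Σ_{s=1}^{t−1} ũ_a^(s)⟩ − φ(y)/η_a^(t). Then for every t with 1 ≤ t ≤ T−1: Σ_{a=1}^m (η_a^(t+1))^{−1/2} ‖y_a^(t+1) − y_a^(t)‖_{y_a^(t),φ} ≤ 1/2, where ‖h‖_{y,φ} = √( Σ_k h(k)²/y(k)² ). -/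

import Mathlib

open Finset

noncomputable section

/-- The `(d-1)`-dimensional probability simplex in `ℝ^d`. -/
def simplex (d : ℕ) : Set (Fin d → ℝ) :=
  {x | (∀ k, 0 ≤ x k) ∧ ∑ k, x k = 1}

/-- Standard inner product on `ℝ^d`. -/
def inp {d : ℕ} (u v : Fin d → ℝ) : ℝ := ∑ k, u k * v k

/-- `ℓ¹` norm. -/
def l1 {d : ℕ} (v : Fin d → ℝ) : ℝ := ∑ k, |v k|

/-- `ℓ∞` norm. -/
def linf {d : ℕ} (v : Fin d → ℝ) : ℝ := ⨆ k, |v k|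

/-- Matrix-vector product `A y`. -/
def mvec {d e : ℕ} (A : Fin d → Fin e → ℝ) (v : Fin e → ℝ) : Fin d → ℝ :=
  fun i => ∑ j, A i j * v j

/-- Transposed matrix-vector product `Aᵀ x`. -/
def tvec {d e : ℕ} (A : Fin d → Fin e → ℝ) (v : Fin d → ℝ) : Fin e → ℝ :=
  fun j => ∑ i, A i j * v i

/-- Row-stochastic matrices. -/
def rowStoch {m : ℕ} (M : Fin m → Fin m → ℝ) : Prop :=
  ∀ a, M a ∈ simplex m

/-- Shannon entropy. -/
def shannonH {d : ℕ} (x : Fin d → ℝ) : ℝ := ∑ k, x k * Real.log (1 / x k)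

/-- Log-barrier regularizer. -/
def logBarrier {d : ℕ} (x : Fin d → ℝ) : ℝ := -∑ k, Real.log (x k)

/-- Local norm `‖h‖_{x,φ}` induced by the Hessian of the log-barrier at `x`. -/
def locNorm {d : ℕ} (x h : Fin d → ℝ) : ℝ := Real.sqrt (∑ k, (h k) ^ 2 / (x k) ^ 2)

/-- Dual local norm `‖h‖_{*,x,φ}` for the log-barrier at `x`. -/
def dualLocNorm {d : ℕ} (x h : Fin d → ℝ) : ℝ := Real.sqrt (∑ k, (x k) ^ 2 * (h k) ^ 2)

/-- `log₊ z = max (log z) 4`. -/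
def logp (z : ℕ) : ℝ := max (Real.log z) 4

/-!
The optimality conditions of the log-barrier problem over the simplex say
`1 / y(k) = c - η G(k)` for a scalar `c`. For two consecutive rounds, with `β = 1 - η'/η`,
`Δ = G' - G`, `W = ⟨y, y'⟩` and `A` the `y y'`-weighted mean of `Δ`, this becomes the identity
`y'/y - 1 = β (y'/y - y'/W) + η' y' (Δ - A)`, the normalisations of `y` and `y'` fixing the
constant. As `‖y' - y‖_{y,φ}` is the Euclidean norm of `y'/y - 1` and `1/W ≤ Σ y'/y` by
Cauchy–Schwarz, the triangle inequality gives
`‖y' - y‖_{y,φ} (1 - β(1 + √m)) ≤ β (m + √m) + 2 η' ‖Δ‖_∞`.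
The adaptive rate makes `β m ≤ 8 ε η'²`, where `ε` is the new squared increment of the
expert's utility, so each term of the sum is `O(ε + ‖Δ‖_∞)`; both are controlled by
`x̂^(t)(a) + x̂^(t-1)(a)`, whose sum over the experts is at most `2`.
-/

open WithLp

theorem abs_le_linf {d : ℕ} (v : Fin d → ℝ) (k : Fin d) : |v k| ≤ linf v :=
  le_ciSup (f := fun j => |v j|) (Set.finite_range _).bddAbove k

theorem linf_nonneg {d : ℕ} (v : Fin d → ℝ) : 0 ≤ linf v :=
  Real.iSup_nonneg fun _ => abs_nonneg _

theorem linf_le {d : ℕ} {v : Fin d → ℝ} {r : ℝ} (h : ∀ k, |v k| ≤ r) (hr : 0 ≤ r) :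
    linf v ≤ r :=
  Real.iSup_le h hr

theorem nonempty_of_mem_simplex {d : ℕ} {x : Fin d → ℝ} (hx : x ∈ simplex d) :
    Nonempty (Fin d) :=
  univ_nonempty_iff.1 (nonempty_of_sum_ne_zero (hx.2 ▸ one_ne_zero))

theorem norm_toLp_le_one_of_mem_simplex {d : ℕ} {x : Fin d → ℝ} (hx : x ∈ simplex d) :
    ‖toLp 2 x‖ ≤ 1 := by
  rw [EuclideanSpace.norm_eq, Real.sqrt_le_one]
  simpa [hx.2] using sum_sq_le_sq_sum_of_nonneg (s := univ) fun k _ => hx.1 k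

theorem norm_toLp_le_of_abs_le {ι : Type*} [Fintype ι] {f g : ι → ℝ}
    (h : ∀ i, |f i| ≤ g i) : ‖toLp 2 f‖ ≤ ‖toLp 2 g‖ := by
  simp only [EuclideanSpace.norm_eq, Real.norm_eq_abs, sq_abs]
  exact Real.sqrt_le_sqrt <| sum_le_sum fun i _ =>
    sq_le_sq' (abs_le.1 (h i)).1 (abs_le.1 (h i)).2

theorem sum_le_sqrt_card_mul_norm {ι : Type*} [Fintype ι] (f : ι → ℝ) :
    ∑ i, f i ≤ √(Fintype.card ι) * ‖toLp 2 f‖ := by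
  simp only [EuclideanSpace.norm_eq, Real.norm_eq_abs, sq_abs]
  rw [← Real.sqrt_mul (Nat.cast_nonneg _)]
  exact Real.le_sqrt_of_sq_le (sq_sum_le_card_mul_sum_sq.trans_eq (by simp))

def IsRegularizedLeader {d : ℕ} (η : ℝ) (G y : Fin d → ℝ) : Prop :=
  y ∈ simplex d ∧ (∀ k, 0 < y k) ∧
    ∀ z ∈ simplex d, (∀ k, 0 < z k) → inp z G - logBarrier z / η ≤ inp y G - logBarrier y / η

theorem hasDerivAt_inp_add_smul {d : ℕ} (y v G : Fin d → ℝ) :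
    HasDerivAt (fun s : ℝ => inp (y + s • v) G) (inp v G) 0 := by
  have h k : HasDerivAt (fun s : ℝ => (y k + s * v k) * G k) (v k * G k) 0 := by
    simpa using (((hasDerivAt_id (0 : ℝ)).mul_const (v k)).const_add (y k)).mul_const (G k)
  simpa [inp] using HasDerivAt.fun_sum fun k (_ : k ∈ univ) => h k

theorem hasDerivAt_logBarrier_add_smul {d : ℕ} {y : Fin d → ℝ} (hy : ∀ k, 0 < y k)
    (v : Fin d → ℝ) :
    HasDerivAt (fun s : ℝ => logBarrier (y + s • v)) (-∑ k, v k / y k) 0 := by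
  have h k : HasDerivAt (fun s : ℝ => Real.log (y k + s * v k)) (v k / y k) 0 := by
    simpa using (((hasDerivAt_id (0 : ℝ)).mul_const (v k)).const_add (y k)).log
      (by simpa using (hy k).ne')
  simpa [logBarrier] using (HasDerivAt.fun_sum fun k (_ : k ∈ univ) => h k).fun_neg

namespace IsRegularizedLeader

variable {d : ℕ} {η : ℝ} {G y : Fin d → ℝ}

theorem inp_add_sum_div_eq_zero (hy : IsRegularizedLeader η G y) {v : Fin d → ℝ}
    (hv : ∑ k, v k = 0) : inp v G + (∑ k, v k / y k) / η = 0 := by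
  obtain ⟨hys, hy0, hmax⟩ := hy
  have hpos : ∀ᶠ s in nhds (0 : ℝ), ∀ k, 0 < (y + s • v) k :=
    Filter.eventually_all.2 fun k =>
      ((by fun_prop : Continuous fun s : ℝ => y k + s * v k).tendsto 0).eventually
        (lt_mem_nhds (by simpa using hy0 k))
  have hloc : IsLocalMax (fun s : ℝ => inp (y + s • v) G - logBarrier (y + s • v) / η) 0 :=
    hpos.mono fun s hs => by
      simpa using
        hmax _ ⟨fun k => (hs k).le, by simp [sum_add_distrib, ← mul_sum, hv, hys.2]⟩ hs
  simpa [neg_div] using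
    hloc.hasDerivAt_eq_zero ((hasDerivAt_inp_add_smul y v G).sub
      ((hasDerivAt_logBarrier_add_smul hy0 v).div_const η))

theorem exists_inv_eq (hy : IsRegularizedLeader η G y) (hη : 0 < η) :
    ∃ c, ∀ k, 1 / y k = c - η * G k := by
  have key k l : 1 / y k + η * G k = 1 / y l + η * G l := by
    have h := hy.inp_add_sum_div_eq_zero (v := Pi.single k 1 - Pi.single l 1) (by simp)
    simp only [inp, Pi.sub_apply, Pi.single_apply, sub_mul, ite_mul, one_mul, zero_mul,
      sum_sub_distrib, sum_ite_eq', mem_univ, ↓reduceIte, sub_div, ite_div, one_div, zero_div] at h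
    field_simp at h
    linarith
  rcases isEmpty_or_nonempty (Fin d) with h | ⟨⟨k₀⟩⟩
  · exact ⟨0, isEmptyElim⟩
  · exact ⟨1 / y k₀ + η * G k₀, fun k => by linarith [key k k₀]⟩

end IsRegularizedLeader

theorem mul_sum_mul_eq_of_inv_sub_inv {ι : Type*} [Fintype ι] {y y' g : ι → ℝ} {c : ℝ}
    (hy0 : ∀ k, 0 < y k) (hy'0 : ∀ k, 0 < y' k) (hsum : ∑ k, y k = ∑ k, y' k)
    (h : ∀ k, 1 / y k - 1 / y' k = g k - c) :
    c * ∑ k, y k * y' k = ∑ k, y k * y' k * g k := by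
  have hk k : y k * y' k * g k - c * (y k * y' k) = y' k - y k := by
    have := h k
    field_simp [(hy0 k).ne', (hy'0 k).ne'] at this
    linear_combination -this
  have := congrArg₂ (· - ·) (sum_congr rfl fun k (_ : k ∈ univ) => hk k) hsum
  simp only [sum_sub_distrib, ← mul_sum] at this
  linarith

theorem div_sub_one_eq_of_inv_eq {m : ℕ} {η η' c c' : ℝ} {G G' y y' : Fin m → ℝ}
    (hy : y ∈ simplex m) (hy0 : ∀ k, 0 < y k) (hy' : y' ∈ simplex m) (hy'0 : ∀ k, 0 < y' k)
    (hη : η ≠ 0) (hG : ∀ k, 1 / y k = c - η * G k) (hG' : ∀ k, 1 / y' k = c' - η' * G' k)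
    (k : Fin m) :
    y' k / y k - 1 = (1 - η' / η) * (y' k / y k - y' k / ∑ j, y j * y' j) +
      η' * (y' k * (G' k - G k - (∑ j, y j * y' j * (G' j - G j)) / ∑ j, y j * y' j)) := by
  have := nonempty_of_mem_simplex hy
  set W := ∑ j, y j * y' j
  have hW : 0 < W := sum_pos (fun j _ => mul_pos (hy0 j) (hy'0 j)) univ_nonempty
  have hinv j : 1 / y j - 1 / y' j =
      ((1 - η' / η) * (1 / y j) + η' * (G' j - G j)) - (c' - η' / η * c) := by
    rw [hG, hG']
    field_simp
    ring
  have hc := mul_sum_mul_eq_of_inv_sub_inv hy0 hy'0 (hy.2.trans hy'.2.symm) hinv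
  have hβ : ∑ j, y j * y' j * ((1 - η' / η) * (1 / y j)) = 1 - η' / η := by
    calc _ = (1 - η' / η) * ∑ j, y' j := by
          rw [mul_sum]
          exact sum_congr rfl fun j _ => by field_simp [(hy0 j).ne']
      _ = _ := by rw [hy'.2, mul_one]
  have hS : ∑ j, y j * y' j * (η' * (G' j - G j)) = η' * ∑ j, y j * y' j * (G' j - G j) := by
    rw [mul_sum]
    exact sum_congr rfl fun j _ => by ring
  simp only [mul_add, sum_add_distrib, hβ, hS] at hc
  have hc₀ : c' - η' / η * c = (1 - η' / η + η' * ∑ j, y j * y' j * (G' j - G j)) / W :=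
    eq_div_of_mul_eq hW.ne' hc
  calc y' k / y k - 1 = y' k * (1 / y k - 1 / y' k) := by
        field_simp [(hy0 k).ne', (hy'0 k).ne']
    _ = _ := by rw [hinv k, hc₀]; ring

theorem abs_sum_mul_div_sum_le {ι : Type*} [Fintype ι] {w f : ι → ℝ} {D : ℝ}
    (hw : ∀ i, 0 ≤ w i) (hW : 0 < ∑ i, w i) (h : ∀ i, |f i| ≤ D) :
    |(∑ i, w i * f i) / ∑ i, w i| ≤ D := by
  rw [abs_div, abs_of_pos hW, div_le_iff₀ hW, mul_sum]
  refine (abs_sum_le_sum_abs _ _).trans (sum_le_sum fun i _ => ?_)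
  rw [abs_mul, abs_of_nonneg (hw i), mul_comm]
  exact mul_le_mul_of_nonneg_right (h i) (hw i)

theorem inv_sum_mul_le_sum_div {d : ℕ} {y y' : Fin d → ℝ} (hy0 : ∀ k, 0 < y k)
    (hy' : y' ∈ simplex d) (hy'0 : ∀ k, 0 < y' k) :
    (∑ k, y k * y' k)⁻¹ ≤ ∑ k, y' k / y k := by
  have h := sq_sum_div_le_sum_sq_div univ y' fun k _ => mul_pos (hy0 k) (hy'0 k)
  rw [hy'.2, one_pow, one_div] at h
  refine h.trans_eq (sum_congr rfl fun k _ => ?_)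
  field_simp [(hy'0 k).ne']

theorem locNorm_sub_eq_norm {d : ℕ} {y : Fin d → ℝ} (hy0 : ∀ k, 0 < y k) (y' : Fin d → ℝ) :
    locNorm y (y' - y) = ‖toLp 2 fun k => y' k / y k - 1‖ := by
  rw [locNorm, EuclideanSpace.norm_eq]
  congr 1
  refine sum_congr rfl fun k _ => ?_
  simp only [Pi.sub_apply, Real.norm_eq_abs, sq_abs]
  field_simp [(hy0 k).ne']

theorem locNorm_sub_mul_le {m : ℕ} {η η' c c' D : ℝ} {G G' y y' : Fin m → ℝ}
    (hy : y ∈ simplex m) (hy0 : ∀ k, 0 < y k) (hy' : y' ∈ simplex m) (hy'0 : ∀ k, 0 < y' k)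
    (hη' : 0 < η') (hη'η : η' ≤ η)
    (hG : ∀ k, 1 / y k = c - η * G k) (hG' : ∀ k, 1 / y' k = c' - η' * G' k)
    (hD : ∀ k, |G' k - G k| ≤ D) :
    locNorm y (y' - y) * (1 - (1 - η' / η) * (1 + √m)) ≤
      (1 - η' / η) * (m + √m) + 2 * η' * D := by
  have hη : 0 < η := hη'.trans_le hη'η
  set β := 1 - η' / η
  have hβ : 0 ≤ β := sub_nonneg.2 ((div_le_one hη).2 hη'η)
  have := nonempty_of_mem_simplex hy
  set W := ∑ j, y j * y' j
  have hW : 0 < W := sum_pos (fun j _ => mul_pos (hy0 j) (hy'0 j)) univ_nonempty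
  set A := (∑ j, y j * y' j * (G' j - G j)) / W
  set u : EuclideanSpace ℝ (Fin m) := toLp 2 fun k => y' k / y k - 1
  set r : EuclideanSpace ℝ (Fin m) := toLp 2 fun k => y' k / y k
  set q : EuclideanSpace ℝ (Fin m) := toLp 2 fun k => y' k * (G' k - G k - A)
  have hu : u = β • (r - W⁻¹ • toLp 2 y') + η' • q := by
    ext k
    simp only [u, r, q, PiLp.add_apply, PiLp.smul_apply, PiLp.sub_apply,
      smul_eq_mul]
    rw [div_sub_one_eq_of_inv_eq hy hy0 hy' hy'0 hη.ne' hG hG' k]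
    ring
  have hr : ‖r‖ ≤ √m + ‖u‖ := by
    have : r = toLp 2 (fun _ => 1) + u := by ext k; simp [r, u]
    rw [this]
    refine (norm_add_le _ _).trans ?_
    simp [EuclideanSpace.norm_eq]
  have hWinv : W⁻¹ ≤ m + √m * ‖u‖ := by
    have h := sum_le_sqrt_card_mul_norm fun k => y' k / y k - 1
    rw [sum_sub_distrib] at h
    simp only [sum_const, card_univ, Fintype.card_fin, nsmul_eq_mul, mul_one] at h
    linarith [inv_sum_mul_le_sum_div hy0 hy' hy'0]
  have hq : ‖q‖ ≤ 2 * D := by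
    have hA : |A| ≤ D :=
      abs_sum_mul_div_sum_le (fun j => (mul_pos (hy0 j) (hy'0 j)).le) hW hD
    have hD0 : 0 ≤ D := (abs_nonneg _).trans hA
    calc ‖q‖ ≤ ‖toLp 2 ((2 * D) • y')‖ := norm_toLp_le_of_abs_le fun k => by
          rw [abs_mul, abs_of_pos (hy'0 k), Pi.smul_apply, smul_eq_mul, mul_comm]
          exact mul_le_mul_of_nonneg_right
            ((abs_sub _ _).trans (by linarith [hD k])) (hy'0 k).le
      _ = 2 * D * ‖toLp 2 y'‖ := by
          rw [WithLp.toLp_smul, norm_smul, Real.norm_of_nonneg (by linarith)]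
      _ ≤ 2 * D := mul_le_of_le_one_right (by linarith) (norm_toLp_le_one_of_mem_simplex hy')
  have key : ‖u‖ ≤ β * (√m + ‖u‖ + (m + √m * ‖u‖)) + η' * (2 * D) :=
    calc ‖u‖ ≤ β * (‖r‖ + W⁻¹ * ‖toLp 2 y'‖) + η' * ‖q‖ := by
          rw [hu]
          refine (norm_add_le _ _).trans ?_
          rw [norm_smul, norm_smul, Real.norm_of_nonneg hβ, Real.norm_of_nonneg hη'.le]
          gcongr
          refine (norm_sub_le _ _).trans ?_
          rw [norm_smul, Real.norm_of_nonneg (inv_pos.2 hW).le]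
      _ ≤ β * (√m + ‖u‖ + (m + √m * ‖u‖) * 1) + η' * (2 * D) := by
          gcongr
          exact norm_toLp_le_one_of_mem_simplex hy'
      _ = _ := by rw [mul_one]
  rw [locNorm_sub_eq_norm hy0]
  nlinarith

def adaptiveRate (Q cap b : ℝ) : ℝ := min (√(Q / b)) cap

section adaptiveRate

variable {Q cap b ε : ℝ}

theorem adaptiveRate_pos (hQ : 0 < Q) (hcap : 0 < cap) (hb : 0 < b) :
    0 < adaptiveRate Q cap b :=
  lt_min (Real.sqrt_pos.2 (div_pos hQ hb)) hcap

theorem adaptiveRate_le_cap : adaptiveRate Q cap b ≤ cap := min_le_right _ _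

theorem adaptiveRate_add_le (hQ : 0 ≤ Q) (hb : 0 < b) (hε : 0 ≤ ε) :
    adaptiveRate Q cap (b + ε) ≤ adaptiveRate Q cap b :=
  min_le_min_right _ <| Real.sqrt_le_sqrt <| div_le_div_of_nonneg_left hQ hb (by linarith)

theorem one_sub_adaptiveRate_div_mul_le (hQ : 0 < Q) (hcap : 0 < cap) (hb : 0 < b)
    (hε : 0 ≤ ε) :
    (1 - adaptiveRate Q cap (b + ε) / adaptiveRate Q cap b) * Q ≤
      ε * adaptiveRate Q cap (b + ε) ^ 2 := by
  set η := adaptiveRate Q cap b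
  set η' := adaptiveRate Q cap (b + ε)
  have hη : 0 < η := adaptiveRate_pos hQ hcap hb
  set s := √(Q / b)
  set s' := √(Q / (b + ε))
  have hss' : s' ≤ s := Real.sqrt_le_sqrt <| div_le_div_of_nonneg_left hQ.le hb (by linarith)
  rcases le_total s' cap with h | h
  · have hη' : η' = s' := min_eq_left h
    have hs : s ^ 2 * b = Q := by rw [Real.sq_sqrt (by positivity)]; field_simp
    have hs' : s' ^ 2 * (b + ε) = Q := by rw [Real.sq_sqrt (by positivity)]; field_simp
    have hs0 : 0 < s := Real.sqrt_pos.2 (div_pos hQ hb)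
    have hratio : s' / s ≤ η' / η := by
      rw [hη']
      exact div_le_div_of_nonneg_left (Real.sqrt_nonneg _) hη (min_le_left _ _)
    calc (1 - η' / η) * Q ≤ (1 - s' / s) * Q := by gcongr
      _ = Q - s * s' * b := by rw [← hs]; field_simp
      _ ≤ Q - s' * s' * b := by gcongr
      _ = ε * η' ^ 2 := by rw [hη']; linear_combination -hs'
  · have hη' : η' = cap := min_eq_right h
    have hη_eq : η = cap := min_eq_right (h.trans hss')
    rw [hη', hη_eq, div_self hcap.ne', sub_self, zero_mul]
    positivity

end adaptiveRate

theorem inv_sqrt_mul_le_of_mul_sub_le {m N β η ε D : ℝ} (hm : 1 ≤ m) (hN : 0 ≤ N)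
    (hβ : 0 ≤ β) (hη : 0 < η) (hη1 : η ≤ 1 / 256) (hε0 : 0 ≤ ε) (hε : ε ≤ 4) (hD : 0 ≤ D)
    (hβm : β * m ≤ 8 * ε * η ^ 2)
    (h : N * (1 - β * (1 + √m)) ≤ β * (m + √m) + 2 * η * D) :
    1 / √η * N ≤ ε / 224 + D / 7 := by
  set s := √η
  have hs0 : 0 < s := Real.sqrt_pos.2 hη
  have hss : η = s ^ 2 := (Real.sq_sqrt hη.le).symm
  have hs1 : s ≤ 1 / 16 := by
    rw [Real.sqrt_le_left (by norm_num)]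
    linarith
  have hsqm : √m ≤ m := Real.sqrt_le_self_iff.2 (Or.inr hm)
  have hβm' : β * (1 + √m) ≤ 1 / 8 := by
    have : s ^ 4 ≤ (1 / 16) ^ 4 := by gcongr
    nlinarith
  have hN' : N ≤ 8 / 7 * (16 * ε * s ^ 4 + 2 * s ^ 2 * D) := by
    have h1 : N * (7 / 8) ≤ N * (1 - β * (1 + √m)) := by gcongr; linarith
    have h2 : β * √m ≤ β * m := by gcongr
    rw [hss] at h hβm
    nlinarith
  calc 1 / s * N ≤ 1 / s * (8 / 7 * (16 * ε * s ^ 4 + 2 * s ^ 2 * D)) := by gcongr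
    _ = 8 / 7 * (16 * ε * s ^ 3 + 2 * s * D) := by field_simp
    _ ≤ 8 / 7 * (16 * ε * (1 / 16) ^ 3 + 2 * (1 / 16) * D) := by gcongr
    _ = ε / 224 + D / 7 := by ring

theorem inv_sqrt_adaptiveRate_mul_locNorm_le {m : ℕ} {Q cap b ε D : ℝ}
    {G G' y y' : Fin m → ℝ} (hQm : (m : ℝ) ≤ 8 * Q) (hcap : 0 < cap)
    (hcap' : cap ≤ 1 / 256) (hb : 0 < b) (hε0 : 0 ≤ ε) (hε : ε ≤ 4)
    (hy : IsRegularizedLeader (adaptiveRate Q cap b) G y)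
    (hy' : IsRegularizedLeader (adaptiveRate Q cap (b + ε)) G' y')
    (hD : ∀ k, |G' k - G k| ≤ D) :
    1 / √(adaptiveRate Q cap (b + ε)) * locNorm y (y' - y) ≤ ε / 224 + D / 7 := by
  have := nonempty_of_mem_simplex hy.1
  have hm : (1 : ℝ) ≤ m := Nat.one_le_cast.2 (Fin.pos_iff_nonempty.2 this)
  have hQ : 0 < Q := by linarith
  set η := adaptiveRate Q cap b
  set η' := adaptiveRate Q cap (b + ε)
  have hη : 0 < η := adaptiveRate_pos hQ hcap hb
  have hη' : 0 < η' := adaptiveRate_pos hQ hcap (by linarith)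
  have hη'η : η' ≤ η := adaptiveRate_add_le hQ.le hb hε0
  obtain ⟨c, hc⟩ := hy.exists_inv_eq hη
  obtain ⟨c', hc'⟩ := hy'.exists_inv_eq hη'
  have hβ : 0 ≤ 1 - η' / η := sub_nonneg.2 ((div_le_one hη).2 hη'η)
  have hβm : (1 - η' / η) * m ≤ 8 * ε * η' ^ 2 := by
    nlinarith [one_sub_adaptiveRate_div_mul_le hQ hcap hb hε0]
  exact inv_sqrt_mul_le_of_mul_sub_le hm (Real.sqrt_nonneg _) hβ hη'
    (adaptiveRate_le_cap.trans hcap') hε0 hε ((abs_nonneg _).trans (hD (Classical.arbitrary _))) hβm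
    (locNorm_sub_mul_le hy.1 hy.2.1 hy'.1 hy'.2.1 hη' hη'η hc hc' hD)

theorem one_le_log_of_three_le {T : ℕ} (hT : 3 ≤ T) : 1 ≤ Real.log T := by
  rw [Real.le_log_iff_exp_le (by positivity)]
  have : (3 : ℝ) ≤ T := by exact_mod_cast hT
  linarith [Real.exp_one_lt_d9]

theorem abs_smul_apply_le {d : ℕ} {c : ℝ} (hc : 0 ≤ c) {v : Fin d → ℝ} (hv : linf v ≤ 1)
    (k : Fin d) : |(c • v) k| ≤ c := by
  rw [Pi.smul_apply, smul_eq_mul, abs_mul, abs_of_nonneg hc]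
  exact mul_le_of_le_one_right hc ((abs_le_linf v k).trans hv)

theorem inv_sqrt_mul_locNorm_succ_le {m : ℕ} {Q cap p p' : ℝ} (hQm : (m : ℝ) ≤ 8 * Q)
    (hcap : 0 < cap) (hcap' : cap ≤ 1 / 256)
    {g : ℕ → Fin m → ℝ} {ρ : ℕ → ℝ} {z : ℕ → Fin m → ℝ} {t : ℕ}
    (hρ : ∀ t, ρ t = adaptiveRate Q cap (4 + ∑ s ∈ Icc 1 (t - 1), linf (g s - g (s - 1)) ^ 2))
    (hz : IsRegularizedLeader (ρ (t + 1)) (g t + ∑ s ∈ Icc 1 t, g s) (z (t + 1)))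
    (hz' : IsRegularizedLeader (ρ (t + 2)) (g (t + 1) + ∑ s ∈ Icc 1 (t + 1), g s) (z (t + 2)))
    (hp : 0 ≤ p) (hp' : 0 ≤ p') (hp1 : p ≤ 1) (hp1' : p' ≤ 1)
    (hg : ∀ k, |g t k| ≤ p) (hg' : ∀ k, |g (t + 1) k| ≤ p') :
    1 / √(ρ (t + 2)) * locNorm (z (t + 1)) (z (t + 2) - z (t + 1))
      ≤ (p' + p) ^ 2 / 224 + (2 * p' + p) / 7 := by
  set S := ∑ s ∈ Icc 1 t, linf (g s - g (s - 1)) ^ 2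
  set ε := linf (g (t + 1) - g t) ^ 2
  have hε : linf (g (t + 1) - g t) ≤ p' + p :=
    linf_le (fun k => (abs_sub _ _).trans (add_le_add (hg' k) (hg k))) (by linarith)
  have hε' : ε ≤ (p' + p) ^ 2 := pow_le_pow_left₀ (linf_nonneg _) hε 2
  have hρ' : ρ (t + 2) = adaptiveRate Q cap (4 + S + ε) := by
    rw [hρ, show t + 2 - 1 = t + 1 by omega, sum_Icc_succ_top (by omega), ← add_assoc]
    rfl
  rw [hρ (t + 1), Nat.add_sub_cancel] at hz
  rw [hρ'] at hz' ⊢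
  have hD k : |(g (t + 1) + ∑ s ∈ Icc 1 (t + 1), g s) k - (g t + ∑ s ∈ Icc 1 t, g s) k|
      ≤ 2 * p' + p := by
    rw [Pi.add_apply, Pi.add_apply, Finset.sum_apply, Finset.sum_apply,
      sum_Icc_succ_top (by omega : 1 ≤ t + 1)]
    calc _ = |2 * g (t + 1) k - g t k| := by ring_nf
      _ ≤ 2 * |g (t + 1) k| + |g t k| := by
        simpa [abs_mul] using abs_sub (2 * g (t + 1) k) (g t k)
      _ ≤ 2 * p' + p := by gcongr; exacts [hg' k, hg k]
  refine (inv_sqrt_adaptiveRate_mul_locNorm_le hQm hcap hcap' (by positivity) (sq_nonneg _)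
    (hε'.trans (by nlinarith)) hz hz' hD).trans ?_
  gcongr

theorem sum_sq_div_add_div_le_half {m : ℕ} {p p' : Fin m → ℝ} (hp : ∀ a, 0 ≤ p a)
    (hp' : ∀ a, 0 ≤ p' a) (hp1 : ∑ a, p a ≤ 1) (hp1' : ∑ a, p' a ≤ 1) :
    ∑ a, ((p' a + p a) ^ 2 / 224 + (2 * p' a + p a) / 7) ≤ 1 / 2 := by
  have hsq : ∑ a, (p' a + p a) ^ 2 ≤ (∑ a, p' a + ∑ a, p a) ^ 2 :=
    sum_add_distrib (f := p') ▸ sum_sq_le_sq_sum_of_nonneg fun a _ => add_nonneg (hp' a) (hp a)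
  rw [sum_add_distrib, ← sum_div, ← sum_div, sum_add_distrib, ← mul_sum]
  nlinarith [sum_nonneg fun a (_ : a ∈ univ) => hp a, sum_nonneg fun a (_ : a ∈ univ) => hp' a]

/-- stability of the OFTRL (log-barrier, adaptive learning rate)
transition rows of the Markov chain (Lemma `diff_local_oftrl`). -/
theorem oftrl_logbarrier_markov_stability
    (n m T : ℕ) (hn : 1 ≤ n) (hm : 2 ≤ m) (hT : 3 ≤ T)
    (ut : ℕ → Fin m → ℝ) (hut : ∀ s ∈ Finset.Icc 1 T, linf (ut s) ≤ 1)
    (xhat : ℕ → Fin m → ℝ)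
    (hxhat : ∀ t ∈ Finset.Icc 1 T, xhat t ∈ simplex m)
    (hxhat0 : xhat 0 = 0)
    (ua : Fin m → ℕ → Fin m → ℝ)
    (hua : ∀ a s, ua a s = xhat s a • ut s)
    (η : Fin m → ℕ → ℝ)
    (hη : ∀ a t, η a t = min
      (Real.sqrt (((m : ℝ) * Real.log T / 8) /
        (4 + ∑ s ∈ Finset.Icc 1 (t - 1), (linf (ua a s - ua a (s - 1))) ^ 2)))
      (1 / (256 * (n : ℝ) * Real.sqrt m)))
    -- y_a⁽ᵗ⁾ is the (interior) maximizer of the OFTRL objective with log-barrier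
    (y : Fin m → ℕ → Fin m → ℝ)
    (hy : ∀ a, ∀ t ∈ Finset.Icc 1 T,
      y a t ∈ simplex m ∧ (∀ k, 0 < y a t k) ∧
      ∀ z ∈ simplex m, (∀ k, 0 < z k) →
        inp z (ua a (t - 1) + ∑ s ∈ Finset.Icc 1 (t - 1), ua a s) - logBarrier z / η a t
          ≤ inp (y a t) (ua a (t - 1) + ∑ s ∈ Finset.Icc 1 (t - 1), ua a s)
              - logBarrier (y a t) / η a t) :
    ∀ t ∈ Finset.Icc 1 (T - 1),
      ∑ a, (1 / Real.sqrt (η a (t + 1))) * locNorm (y a t) (y a (t + 1) - y a t)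
        ≤ 1 / 2 := by
  intro t ht
  obtain ⟨t, rfl⟩ := Nat.exists_eq_add_of_le' (mem_Icc.1 ht).1
  have htT : t + 2 ≤ T := by grind
  have hm' : (2 : ℝ) ≤ m := by exact_mod_cast hm
  have hQm : (m : ℝ) ≤ 8 * ((m : ℝ) * Real.log T / 8) := by
    nlinarith [one_le_log_of_three_le hT]
  have hnm : (1 : ℝ) ≤ n * √m :=
    one_le_mul_of_one_le_of_one_le (Nat.one_le_cast.2 hn) (Real.one_le_sqrt.2 (by linarith))
  have hcap' : 1 / (256 * (n : ℝ) * √m) ≤ 1 / 256 :=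
    one_div_le_one_div_of_le (by norm_num) (by nlinarith)
  have hx s (hs : s ≤ T) : (∀ a, 0 ≤ xhat s a) ∧ ∑ a, xhat s a ≤ 1 := by
    rcases Nat.eq_zero_or_pos s with rfl | hs0
    · simp [hxhat0]
    · exact (hxhat s (mem_Icc.2 ⟨hs0, hs⟩)).imp_right le_of_eq
  have hle s (hs : s ≤ T) a : xhat s a ≤ 1 :=
    (single_le_sum (fun b _ => (hx s hs).1 b) (mem_univ a)).trans (hx s hs).2
  have hua_le s (hs : s ≤ T) a k : |ua a s k| ≤ xhat s a := by
    rcases Nat.eq_zero_or_pos s with rfl | hs0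
    · simp [hua, hxhat0]
    · exact hua a s ▸ abs_smul_apply_le ((hx s hs).1 a) (hut s (mem_Icc.2 ⟨hs0, hs⟩)) k
  obtain ⟨⟨hx₀, hx₀1⟩, ⟨hx₁, hx₁1⟩⟩ := And.intro (hx t (by omega)) (hx (t + 1) (by omega))
  calc _ ≤ ∑ a, ((xhat (t + 1) a + xhat t a) ^ 2 / 224 + (2 * xhat (t + 1) a + xhat t a) / 7) :=
        sum_le_sum fun a _ => inv_sqrt_mul_locNorm_succ_le hQm (by positivity) hcap' (hη a)
          (hy a (t + 1) (mem_Icc.2 ⟨by omega, by omega⟩)) (hy a (t + 2) (mem_Icc.2 ⟨by omega, htT⟩))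
          (hx₀ a) (hx₁ a) (hle t (by omega) a) (hle (t + 1) (by omega) a)
          (hua_le t (by omega) a) (hua_le (t + 1) (by omega) a)
    _ ≤ 1 / 2 := sum_sq_div_add_div_le_half hx₀ hx₁ hx₀1 hx₁1
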